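/- Let Sω be the group of finitely supported permutations of ℕ⁺ with Coxeter generators σ_i, and suppose σ_i = σ_j holds in a quotient group X of Sω, with 1 < i < j. Then σ_{i-1} = σ_i holds in X. -/
import Mathlib


open FreeGroup in
/-- The Coxeter relations presenting the infinite symmetric group `Sω` of finitely supported
permutations of `ℕ⁺`: `σ_i² = 1`, `σ_{i+1} σ_i σ_{i+1} = σ_i σ_{i+1} σ_i`, and
`σ_{k+2} σ_j = σ_j σ_{k+2}` for `j ≤ k`. -/
def SomegaRels : Set (FreeGroup ℕ+) :=
  {w | (∃ i : ℕ+, w = of i * of i) ∨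
    (∃ i : ℕ+, w = (of (i + 1) * of i * of (i + 1)) * (of i * of (i + 1) * of i)⁻¹) ∨
    (∃ j k : ℕ+, j ≤ k ∧ w = (of (k + 2) * of j) * (of j * of (k + 2))⁻¹)}

/-- The infinite symmetric group `Sω`, presented by the Coxeter generators `σ_i`. -/
def Somega : Type := PresentedGroup SomegaRels

instance : Group Somega := by unfold Somega; infer_instance

/-- The generator `σ_i` (the transposition of `i` and `i+1`) of `Sω`. -/
def Somega.sigma (i : ℕ+) : Somega := PresentedGroup.of i

lemma Somega.rel_eq_one {r : FreeGroup ℕ+} (hr : r ∈ SomegaRels) :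
    PresentedGroup.mk SomegaRels r = 1 := by
  have : r ∈ Subgroup.normalClosure SomegaRels := Subgroup.subset_normalClosure hr
  exact (QuotientGroup.eq_one_iff r).mpr this

lemma Somega.sigma_sq (i : ℕ+) : Somega.sigma i * Somega.sigma i = 1 :=
  Somega.rel_eq_one (Or.inl ⟨i, rfl⟩)

lemma Somega.braid (i : ℕ+) :
    Somega.sigma (i + 1) * Somega.sigma i * Somega.sigma (i + 1) =
      Somega.sigma i * Somega.sigma (i + 1) * Somega.sigma i := by
  have := Somega.rel_eq_one (Or.inr (Or.inl ⟨i, rfl⟩))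
  simp only [map_mul, map_inv] at this
  exact mul_inv_eq_one.mp this

lemma Somega.comm {j k : ℕ+} (hjk : j ≤ k) :
    Somega.sigma (k + 2) * Somega.sigma j = Somega.sigma j * Somega.sigma (k + 2) := by
  have := Somega.rel_eq_one (Or.inr (Or.inr ⟨j, k, hjk, rfl⟩))
  simp only [map_mul, map_inv] at this
  exact mul_inv_eq_one.mp this

/-- If `σ_i = σ_j` holds in a quotient group `X` of `Sω` (given by a homomorphism `f`)
with `1 < i < j`, then `σ_{i-1} = σ_i` holds in `X`. -/
theorem somega_sigma_eq_pred {X : Type*} [Group X] (f : Somega →* X)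
    (i j : ℕ+) (hi : 1 < i) (hij : i < j)
    (h : f (Somega.sigma i) = f (Somega.sigma j)) :
    f (Somega.sigma (i - 1)) = f (Somega.sigma i) := by
  set a := f (Somega.sigma (i - 1)) with ha
  set b := f (Somega.sigma i) with hb
  have hi1 : i - 1 + 1 = i := PNat.sub_add_of_lt hi
  -- braid relation between σ_{i-1} and σ_i
  have hbraid : b * a * b = a * b * a := by
    have := congrArg f (Somega.braid (i - 1))
    rw [hi1] at this
    simpa [map_mul] using this
  -- σ_j commutes with σ_{i-1}
  have hj2 : i - 1 ≤ j - 2 ∧ (j - 2) + 2 = j := by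
    constructor
    · have h2j : (2 : ℕ+) < j := lt_of_le_of_lt (by exact_mod_cast hi) hij
      have hij' : (i : ℕ) < j := hij
      have hi' : (1 : ℕ) < i := hi
      rw [← PNat.coe_le_coe, PNat.sub_coe, PNat.sub_coe, if_pos hi, if_pos h2j]
      have h1 : ((1 : ℕ+) : ℕ) = 1 := rfl
      have h2 : ((2 : ℕ+) : ℕ) = 2 := rfl
      omega
    · exact PNat.sub_add_of_lt (lt_of_le_of_lt (by exact_mod_cast hi) hij)
  have hcomm : b * a = a * b := by
    have := congrArg f (Somega.comm hj2.1)
    rw [hj2.2] at this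
    simpa [map_mul, ← h] using this
  -- a² = 1
  have ha2 : a * a = 1 := by
    have := congrArg f (Somega.sigma_sq (i - 1))
    simpa [map_mul] using this
  -- conclude
  have hb2 : b * b = 1 := by
    have := congrArg f (Somega.sigma_sq i); simpa [map_mul] using this
  have key : a * b * a = b := by rw [← hcomm, mul_assoc, ha2, mul_one]
  have h1 : b * (a * b) = b * 1 := by rw [mul_one, ← mul_assoc, hbraid, key]
  have hab : a * b = 1 := mul_left_cancel h1
  have : a = b⁻¹ := eq_inv_of_mul_eq_one_left hab
  rw [this, inv_eq_of_mul_eq_one_right hb2]
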